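/- arXiv:2006.09958 — 5 statements merged into one kernel-verified Lean document; each statement's English description precedes it below -/
import Mathlib

section
/- Let u be in the MRT class with associated sequences (t_m) and (s_m). Let m ≥ 1 and let n ≤ t_{m+1} be a positive integer. If the total number of prime factors of n that are ≤ t_m, counted with multiplicity (i.e., Σ_{p ≤ t_m} α_p(n), where α_p(n) is the exponent of p in n), is at most t_m, then |u(n) − n^{i s_{m+1}}| ≤ 1/t_m. -/
open MeasureTheory Filter Topology

noncomputable section

/-- The left shift on sequence space. -/
def shift : (ℕ → ℂ) → (ℕ → ℂ) := fun y n => y (n + 1)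

/-- The point of `(S¹)^ℕ` associated with the arithmetic function `u` (indexed from 1). -/
def pt (u : ℕ → ℂ) : ℕ → ℂ := fun n => u (n + 1)

/-- `u` is a completely multiplicative function taking values in the unit circle, in the MRT
class with associated increasing sequences `t`, `s` of positive integers. -/
structure IsMRT (u : ℕ → ℂ) (t s : ℕ → ℕ) : Prop where
  norm_one : ∀ n, 1 ≤ n → ‖u n‖ = 1
  mult : ∀ m n, 1 ≤ m → 1 ≤ n → u (m * n) = u m * u n
  t_mono : StrictMono t
  s_mono : StrictMono s
  t_pos : ∀ m, 1 ≤ t m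
  s_pos : ∀ m, 1 ≤ s m
  t_lt_s : ∀ m, 1 ≤ m → t m < s (m + 1)
  s_lt_sq : ∀ m, 1 ≤ m → s (m + 1) < (s (m + 1)) ^ 2
  sq_le_t : ∀ m, 1 ≤ m → (s (m + 1)) ^ 2 ≤ t (m + 1)
  map_prime_big : ∀ m, 1 ≤ m → ∀ p : ℕ, p.Prime → t m < p → p ≤ t (m + 1) →
    u p = (p : ℂ) ^ ((s (m + 1) : ℂ) * Complex.I)
  map_prime_small : ∀ m, 1 ≤ m → ∀ p : ℕ, p.Prime → p ≤ t m →
    ‖u p - (p : ℂ) ^ ((s (m + 1) : ℂ) * Complex.I)‖ < 1 / (t m : ℝ) ^ 2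

/-!
Both `u` and the Archimedean character `n ↦ n^{i s_{m+1}}` are completely multiplicative with
values of modulus one, so writing `n` as a product of primes and telescoping, `|u(n) − n^{i s}|` is
at most the sum over the prime factors `p` of `n`, with multiplicity, of `|u(p) − p^{i s}|`.
Since `n ≤ t_{m+1}`, a prime factor `p > t_m` contributes nothing, and each of the at most `t_m`
prime factors `p ≤ t_m` contributes less than `1/t_m²`.
-/

open Finset

lemma norm_mul_sub_mul_le_of_norm_le_one {R : Type*} [SeminormedRing R] {a b c d : R}
    (ha : ‖a‖ ≤ 1) (hd : ‖d‖ ≤ 1) : ‖a * b - c * d‖ ≤ ‖a - c‖ + ‖b - d‖ := by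
  calc ‖a * b - c * d‖ = ‖a * (b - d) + (a - c) * d‖ := by noncomm_ring
    _ ≤ ‖a‖ * ‖b - d‖ + ‖a - c‖ * ‖d‖ :=
      (norm_add_le _ _).trans (add_le_add (norm_mul_le _ _) (norm_mul_le _ _))
    _ ≤ 1 * ‖b - d‖ + ‖a - c‖ * 1 := by gcongr
    _ = ‖a - c‖ + ‖b - d‖ := by ring

theorem norm_sub_le_factorization_sum {R : Type*} [SeminormedRing R] {f g : ℕ → R}
    (h_one : f 1 = g 1) (hf : ∀ a b, a ≠ 0 → b ≠ 0 → f (a * b) = f a * f b)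
    (hg : ∀ a b, a ≠ 0 → b ≠ 0 → g (a * b) = g a * g b)
    (hf_norm : ∀ n, n ≠ 0 → ‖f n‖ ≤ 1) (hg_norm : ∀ n, n ≠ 0 → ‖g n‖ ≤ 1) {n : ℕ} (hn : n ≠ 0) :
    ‖f n - g n‖ ≤ n.factorization.sum fun p k => k * ‖f p - g p‖ := by
  induction n using Nat.recOnMul with
  | zero => exact absurd rfl hn
  | one => simp [h_one]
  | prime p hp => simp [hp.factorization]
  | mul a b iha ihb =>
    obtain ⟨ha, hb⟩ := mul_ne_zero_iff.1 hn
    rw [hf a b ha hb, hg a b ha hb, Nat.factorization_mul ha hb,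
      Finsupp.sum_add_index' (fun _ => by simp) (fun _ _ _ => by push_cast; ring)]
    exact (norm_mul_sub_mul_le_of_norm_le_one (hf_norm a ha) (hg_norm b hb)).trans
      (add_le_add (iha ha) (ihb hb))

lemma Nat.factorization_sum_mul_le {n T : ℕ} {ε : ℝ} {w : ℕ → ℝ} (hε : 0 ≤ ε)
    (hw : ∀ p ∈ n.primeFactors, w p ≤ if p ≤ T then ε else 0) :
    (n.factorization.sum fun p k => k * w p) ≤
      (∑ p ∈ filter Nat.Prime (range (T + 1)), n.factorization p : ℕ) * ε := by
  calc (n.factorization.sum fun p k => k * w p)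
      ≤ ∑ p ∈ n.primeFactors, if p ≤ T then (n.factorization p : ℝ) * ε else 0 := by
        rw [Finsupp.sum, Nat.support_factorization]
        refine sum_le_sum fun p hp => ?_
        calc (n.factorization p : ℝ) * w p
            ≤ n.factorization p * if p ≤ T then ε else 0 := by gcongr; exact hw p hp
          _ = _ := by split_ifs <;> ring
    _ = ∑ p ∈ n.primeFactors with p ≤ T, (n.factorization p : ℝ) * ε := (sum_filter _ _).symm
    _ ≤ ∑ p ∈ filter Nat.Prime (range (T + 1)), (n.factorization p : ℝ) * ε := by
        refine sum_le_sum_of_subset_of_nonneg (fun p hp => ?_) fun _ _ _ => by positivity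
        simp only [mem_filter, Nat.mem_primeFactors, mem_range] at hp ⊢
        exact ⟨by omega, hp.1.1⟩
    _ = _ := by rw [← sum_mul]; push_cast; rfl

lemma Complex.norm_natCast_cpow_of_re_eq_zero {k : ℕ} (hk : k ≠ 0) {c : ℂ} (hc : c.re = 0) :
    ‖(k : ℂ) ^ c‖ = 1 := by
  simp [Complex.norm_natCast_cpow_of_pos (Nat.pos_of_ne_zero hk), hc]

namespace IsMRT

variable {u : ℕ → ℂ} {t s : ℕ → ℕ}

lemma map_one (hu : IsMRT u t s) : u 1 = 1 := by
  have h : u 1 * u 1 = u 1 := (hu.mult 1 1 le_rfl le_rfl).symm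
  have hne : u 1 ≠ 0 := norm_ne_zero_iff.1 ((hu.norm_one 1 le_rfl).trans_ne one_ne_zero)
  exact (mul_eq_left₀ hne).1 h

lemma norm_map_prime_sub_cpow_le (hu : IsMRT u t s) {m p : ℕ} (hm : 1 ≤ m) (hp : p.Prime)
    (hpt : p ≤ t (m + 1)) :
    ‖u p - (p : ℂ) ^ ((s (m + 1) : ℂ) * Complex.I)‖ ≤ if p ≤ t m then 1 / (t m : ℝ) ^ 2 else 0 := by
  split_ifs with hpm
  · exact (hu.map_prime_small m hm p hp hpm).le
  · simp [hu.map_prime_big m hm p hp (not_le.1 hpm) hpt]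

theorem norm_sub_cpow_le (hu : IsMRT u t s) {m n : ℕ} (hm : 1 ≤ m) (hn : n ≠ 0)
    (hnt : n ≤ t (m + 1)) :
    ‖u n - (n : ℂ) ^ ((s (m + 1) : ℂ) * Complex.I)‖ ≤
      (∑ p ∈ filter Nat.Prime (range (t m + 1)), n.factorization p : ℕ) * (1 / (t m : ℝ) ^ 2) := by
  have hc : ((s (m + 1) : ℂ) * Complex.I).re = 0 := by simp
  have h_telescope := norm_sub_le_factorization_sum (f := u)
    (g := fun k : ℕ => (k : ℂ) ^ ((s (m + 1) : ℂ) * Complex.I)) (by simp [hu.map_one])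
    (fun a b ha hb => hu.mult a b (Nat.pos_of_ne_zero ha) (Nat.pos_of_ne_zero hb))
    (fun a b _ _ => by simp only [Nat.cast_mul, Complex.natCast_mul_natCast_cpow])
    (fun k hk => (hu.norm_one k (Nat.pos_of_ne_zero hk)).le)
    (fun k hk => (Complex.norm_natCast_cpow_of_re_eq_zero hk hc).le) hn
  refine h_telescope.trans (Nat.factorization_sum_mul_le (by positivity) fun p hp => ?_)
  exact hu.norm_map_prime_sub_cpow_le hm (Nat.prime_of_mem_primeFactors hp)
    ((Nat.le_of_mem_primeFactors hp).trans hnt)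

end IsMRT

/-- Let `u` be in the MRT class with sequences `(t_m)`, `(s_m)`. Let `m ≥ 1` and
`1 ≤ n ≤ t_{m+1}`. If the number of prime factors of `n` that are `≤ t_m`, counted with
multiplicity, is at most `t_m`, then `|u(n) − n^{i s_{m+1}}| ≤ 1/t_m`. -/
theorem mrt_easy_lemma (u : ℕ → ℂ) (t s : ℕ → ℕ) (hu : IsMRT u t s) (m n : ℕ)
    (hm : 1 ≤ m) (hn : 1 ≤ n) (hnt : n ≤ t (m + 1))
    (hfac : ∑ p ∈ Finset.filter Nat.Prime (Finset.range (t m + 1)), n.factorization p ≤ t m) :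
    ‖u n - (n : ℂ) ^ ((s (m + 1) : ℂ) * Complex.I)‖ ≤ 1 / (t m : ℝ) := by
  calc _ ≤ _ := hu.norm_sub_cpow_le hm (Nat.one_le_iff_ne_zero.1 hn) hnt
    _ ≤ (t m : ℝ) * (1 / (t m : ℝ) ^ 2) :=
      mul_le_mul_of_nonneg_right (by exact_mod_cast hfac) (by positivity)
    _ = 1 / (t m : ℝ) := by field_simp
end
end

section
/- Let P and R be two nonzero polynomials (over ℝ), of degrees p and r respectively, with p ≠ r. Define the polynomial R̃ by R̃(n) := R(n+1)P(n) − R(n)P(n+1). Then the degree of R̃ is exactly r + p − 1, and its leading coefficient is (r − p)·a_P·a_R, where a_P and a_R are the leading coefficients of P and R. -/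
/-!
For a shift `c`, the polynomial `Δf := f(X + c) - f` has degree at most `deg f - 1` and
coefficient `deg f · lc f · c` there (it vanishes when `f` is constant). Since
`R(X+1)P - RP(X+1) = ΔR·P - ΔP·R`, both products have degree at most `r + p - 1`, with
coefficients `r·a_R·a_P` and `p·a_P·a_R` in that degree, which do not cancel because `r ≠ p`.
-/

open Polynomial

namespace Polynomial

variable {R : Type*}

section Semiring

variable [Semiring R]

theorem coeff_taylor_natDegree_sub_one (f : R[X]) (r : R) :
    (taylor r f).coeff (f.natDegree - 1) =
      f.coeff (f.natDegree - 1) + f.natDegree * f.leadingCoeff * r := by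
  rcases Nat.eq_zero_or_pos f.natDegree with hf | hf
  · rw [eq_C_of_natDegree_eq_zero hf]; simp
  have hle : (hasseDeriv (f.natDegree - 1) f).natDegree < 2 :=
    (natDegree_hasseDeriv_le f _).trans_lt (by omega)
  have hsucc : f.natDegree = 1 + (f.natDegree - 1) := by omega
  rw [taylor_coeff, eval_eq_sum_range' hle, Finset.sum_range_succ, Finset.sum_range_one,
    hasseDeriv_coeff, hasseDeriv_coeff, zero_add, ← hsucc, Nat.choose_self,
    ← Nat.choose_symm_of_eq_add hsucc, Nat.choose_one_right, leadingCoeff]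
  simp

end Semiring

section Ring

variable [Ring R]

theorem taylor_sub_self_of_natDegree_eq_zero {f : R[X]} (hf : f.natDegree = 0) (r : R) :
    taylor r f - f = 0 := by
  rw [eq_C_of_natDegree_eq_zero hf, taylor_C, sub_self]

theorem natDegree_taylor_sub_self_le (f : R[X]) (r : R) :
    (taylor r f - f).natDegree ≤ f.natDegree - 1 := by
  by_cases hf : f = 0
  · simp [hf]
  by_cases hsub : taylor r f - f = 0
  · simp [hsub]
  have hlt := natDegree_lt_natDegree hsub <|
    degree_sub_lt_left (degree_taylor f r) ((taylor_eq_zero r f).not.mpr hf)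
      (leadingCoeff_taylor r f)
  rw [natDegree_taylor] at hlt
  exact Nat.le_sub_one_of_lt hlt

theorem coeff_taylor_sub_self_natDegree_sub_one (f : R[X]) (r : R) :
    (taylor r f - f).coeff (f.natDegree - 1) = f.natDegree * f.leadingCoeff * r := by
  rw [coeff_sub, coeff_taylor_natDegree_sub_one, add_sub_cancel_left]

theorem natDegree_taylor_sub_self_mul_le (f g : R[X]) (r : R) :
    ((taylor r f - f) * g).natDegree ≤ f.natDegree + g.natDegree - 1 := by
  rcases Nat.eq_zero_or_pos f.natDegree with hf | hf
  · simp [taylor_sub_self_of_natDegree_eq_zero hf]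
  exact natDegree_mul_le_of_le (natDegree_taylor_sub_self_le f r) le_rfl |>.trans (by omega)

theorem coeff_taylor_sub_self_mul (f g : R[X]) (r : R) :
    ((taylor r f - f) * g).coeff (f.natDegree + g.natDegree - 1) =
      f.natDegree * f.leadingCoeff * r * g.leadingCoeff := by
  rcases Nat.eq_zero_or_pos f.natDegree with hf | hf
  · simp [taylor_sub_self_of_natDegree_eq_zero hf, hf]
  rw [show f.natDegree + g.natDegree - 1 = (f.natDegree - 1) + g.natDegree by omega,
    coeff_mul_add_eq_of_natDegree_le (natDegree_taylor_sub_self_le f r) le_rfl,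
    coeff_taylor_sub_self_natDegree_sub_one]
  rfl

end Ring

end Polynomial

/-- Let `P` and `R` be nonzero real polynomials of degrees `p ≠ r`, and let
`R̃(n) := R(n+1)P(n) − R(n)P(n+1)`. Then `R̃` has degree exactly `r + p − 1`, with leading
coefficient `(r − p)·a_P·a_R` where `a_P`, `a_R` are the leading coefficients of `P`, `R`. -/
theorem degree_of_twisted_difference (P R : Polynomial ℝ) (p r : ℕ)
    (hP : P ≠ 0) (hR : R ≠ 0) (hPdeg : P.natDegree = p) (hRdeg : R.natDegree = r)
    (hpr : p ≠ r) :
    (R.comp (X + C 1) * P - R * P.comp (X + C 1)).natDegree = r + p - 1 ∧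
      (R.comp (X + C 1) * P - R * P.comp (X + C 1)).leadingCoeff
        = ((r : ℝ) - (p : ℝ)) * P.leadingCoeff * R.leadingCoeff := by
  subst hPdeg hRdeg
  have hQ : R.comp (X + C 1) * P - R * P.comp (X + C 1) =
      (taylor 1 R - R) * P - (taylor 1 P - P) * R := by
    simp only [taylor_apply]; ring
  rw [hQ]
  have hle : ((taylor 1 R - R) * P - (taylor 1 P - P) * R).natDegree ≤
      R.natDegree + P.natDegree - 1 :=
    (natDegree_sub_le_of_le (natDegree_taylor_sub_self_mul_le R P 1)
      (natDegree_taylor_sub_self_mul_le P R 1)).trans (by omega)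
  have hcoeff : ((taylor 1 R - R) * P - (taylor 1 P - P) * R).coeff
      (R.natDegree + P.natDegree - 1) =
        ((R.natDegree : ℝ) - P.natDegree) * P.leadingCoeff * R.leadingCoeff := by
    rw [coeff_sub, coeff_taylor_sub_self_mul, add_comm R.natDegree, coeff_taylor_sub_self_mul]
    ring
  have hne : ((R.natDegree : ℝ) - P.natDegree) * P.leadingCoeff * R.leadingCoeff ≠ 0 := by
    have : (R.natDegree : ℝ) ≠ P.natDegree := by exact_mod_cast hpr.symm
    exact mul_ne_zero (mul_ne_zero (sub_ne_zero.mpr this) (leadingCoeff_ne_zero.mpr hP))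
      (leadingCoeff_ne_zero.mpr hR)
  have hdeg := natDegree_eq_of_le_of_coeff_ne_zero hle (hcoeff ▸ hne)
  exact ⟨hdeg, by rw [leadingCoeff, hdeg, hcoeff]⟩
end

section
/- Let f_d(x) := log( P_d(x) / Q_d(x) ), which is well defined for x real and sufficiently large. Then: (i) for each d ≥ 1 there exists a nonzero constant K_d such that f_d(x) ~ K_d / x^d as x → ∞; (ii) for each d ≥ 0 there exists a nonzero constant L_d such that f′_d(x) ~ L_d / x^{d+1} as x → ∞; (iii) for each d ≥ 0 there exists H_d > 0 such that f′_d is monotone on [H_d, +∞). -/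
open Polynomial Filter Asymptotics

noncomputable section

/-- The pair of polynomial sequences `(P_d, Q_d)`: `P_0(n) = n`, `Q_0(n) = 1`,
`P_{d+1}(n) = P_d(n+1)·Q_d(n)` and `Q_{d+1}(n) = Q_d(n+1)·P_d(n)`. -/
def PQ : ℕ → Polynomial ℝ × Polynomial ℝ
  | 0 => (X, 1)
  | d + 1 => ((PQ d).1.comp (X + C 1) * (PQ d).2, (PQ d).2.comp (X + C 1) * (PQ d).1)

/-- `f_d(x) = log (P_d(x)/Q_d(x))`, well defined for `x` large enough. -/
def fd (d : ℕ) (x : ℝ) : ℝ := Real.log ((PQ d).1.eval x / (PQ d).2.eval x)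

/-!
Since `P_{d+1}/Q_{d+1}` is the ratio of `P_d/Q_d` at `x + 1` and at `x`, we have
`f_{d+1}(x) = f_d(x + 1) - f_d(x)`. Iterating this finite difference from `f_0' = 1/x` gives
`f_d'(x) = (-1)^d d! / (x (x+1) ⋯ (x+d))`, which is monotone for `x > 0` and equivalent to
`(-1)^d d! / x^(d+1)`. By the mean value theorem `f_{d+1}(x)` lies between `f_d'(x)` and
`f_d'(x + 1)`, and both are equivalent to `(-1)^d d! / x^(d+1)`.
-/

theorem Asymptotics.IsEquivalent.of_mem_uIcc {α : Type*} {l : Filter α} {u v f w : α → ℝ}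
    (hu : u ~[l] w) (hv : v ~[l] w) (hf : ∀ᶠ x in l, f x ∈ Set.uIcc (u x) (v x)) :
    f ~[l] w := by
  have hvu : (v - u) =o[l] w := (hv.isLittleO.sub hu.isLittleO).congr_left fun x => by simp
  have hfu : (f - u) =o[l] w :=
    (IsBigO.of_bound 1 (hf.mono fun x hx => by
      simpa using Set.abs_sub_left_of_mem_uIcc hx)).trans_isLittleO hvu
  exact (hfu.add hu.isLittleO).congr_left fun x => by simp

theorem Polynomial.Monic.isEquivalent_const_div_eval {P : ℝ[X]} (hP : P.Monic) (c : ℝ) :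
    (fun x => c / P.eval x) ~[atTop] fun x => c / x ^ P.natDegree := by
  have h := P.isEquivalent_atTop_lead
  simp only [hP.leadingCoeff, one_mul] at h
  exact (IsEquivalent.refl (u := fun _ : ℝ => c)).div h

theorem slope_mem_uIcc_of_hasDerivAt {f f' : ℝ → ℝ} {a b : ℝ} (hab : a < b)
    (hf : ∀ x ∈ Set.Icc a b, HasDerivAt f (f' x) x)
    (hf' : MonotoneOn f' (Set.Icc a b) ∨ AntitoneOn f' (Set.Icc a b)) :
    (f b - f a) / (b - a) ∈ Set.uIcc (f' a) (f' b) := by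
  obtain ⟨c, hc, hfc⟩ := exists_hasDerivAt_eq_slope f f' hab
    (fun x hx => (hf x hx).continuousAt.continuousWithinAt)
    (fun x hx => hf x (Set.Ioo_subset_Icc_self hx))
  have ha : a ∈ Set.Icc a b := Set.left_mem_Icc.2 hab.le
  have hb : b ∈ Set.Icc a b := Set.right_mem_Icc.2 hab.le
  have hc' := Set.Ioo_subset_Icc_self hc
  rw [← hfc]
  rcases hf' with hmono | hanti
  · exact Set.Icc_subset_uIcc ⟨hmono ha hc' hc.1.le, hmono hc' hb hc.2.le⟩
  · exact Set.Icc_subset_uIcc' ⟨hanti hc' hb hc.2.le, hanti ha hc' hc.1.le⟩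

theorem monotoneOn_ascPochhammer_eval {S : Type*} [Semiring S] [PartialOrder S]
    [IsStrictOrderedRing S] (n : ℕ) : MonotoneOn (ascPochhammer S n).eval (Set.Ioi 0) := by
  induction n with
  | zero => simp [monotoneOn_const]
  | succ n ih =>
    intro a ha b hb hab
    simp_rw [ascPochhammer_succ_eval]
    exact mul_le_mul (ih ha hb hab) (add_le_add_left hab _)
      (add_pos_of_pos_of_nonneg ha n.cast_nonneg).le
      (ascPochhammer_pos n b hb).le

theorem monotoneOn_or_antitoneOn_const_div {α 𝕜 : Type*} [Preorder α] [Field 𝕜] [LinearOrder 𝕜]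
    [IsStrictOrderedRing 𝕜] {g : α → 𝕜} {s : Set α} (c : 𝕜)
    (hg : MonotoneOn g s) (hpos : ∀ x ∈ s, 0 < g x) :
    MonotoneOn (fun x => c / g x) s ∨ AntitoneOn (fun x => c / g x) s := by
  rcases le_total 0 c with hc | hc
  · exact .inr fun a ha b hb hab => div_le_div_of_nonneg_left hc (hpos a ha) (hg ha hb hab)
  · refine .inl fun a ha b hb hab => ?_
    simpa [neg_div] using div_le_div_of_nonneg_left (neg_nonneg.2 hc) (hpos a ha) (hg ha hb hab)

theorem PQ_eval_pos (d : ℕ) {x : ℝ} (hx : 0 < x) :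
    0 < (PQ d).1.eval x ∧ 0 < (PQ d).2.eval x := by
  induction d generalizing x with
  | zero => simpa [PQ] using hx
  | succ d ih =>
    obtain ⟨hP, hQ⟩ := ih hx
    obtain ⟨hP₁, hQ₁⟩ := ih (x := x + 1) (by linarith)
    simp only [PQ, eval_mul, eval_comp, eval_add, eval_X, eval_C]
    exact ⟨mul_pos hP₁ hQ, mul_pos hQ₁ hP⟩

theorem fd_succ (d : ℕ) {x : ℝ} (hx : 0 < x) : fd (d + 1) x = fd d (x + 1) - fd d x := by
  obtain ⟨hP, hQ⟩ := PQ_eval_pos d hx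
  obtain ⟨hP₁, hQ₁⟩ := PQ_eval_pos d (x := x + 1) (by linarith)
  rw [fd, fd, fd, ← Real.log_div (by positivity) (by positivity)]
  simp only [PQ, eval_mul, eval_comp, eval_add, eval_X, eval_C]
  congr 1
  field_simp

def fdDeriv (d : ℕ) (x : ℝ) : ℝ := (-1) ^ d * d.factorial / (ascPochhammer ℝ (d + 1)).eval x

theorem fdDeriv_add_one_sub (d : ℕ) {x : ℝ} (hx : 0 < x) :
    fdDeriv d (x + 1) - fdDeriv d x = fdDeriv (d + 1) x := by
  have hA := ascPochhammer_pos (d + 1) x hx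
  have hA₁ := ascPochhammer_pos (d + 1) (x + 1) (by linarith)
  have hleft : (ascPochhammer ℝ (d + 2)).eval x = x * (ascPochhammer ℝ (d + 1)).eval (x + 1) := by
    rw [ascPochhammer_succ_left, eval_mul, eval_X, eval_comp, eval_add, eval_X, eval_one]
  have hright := ascPochhammer_succ_eval (d + 1) x
  simp only [fdDeriv, Nat.factorial_succ, hleft]
  push_cast at hright ⊢
  field_simp
  linear_combination (-(-1 : ℝ) ^ d) * (hleft.symm.trans hright)

theorem hasDerivAt_fd (d : ℕ) {x : ℝ} (hx : 0 < x) : HasDerivAt (fd d) (fdDeriv d x) x := by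
  induction d generalizing x with
  | zero =>
    have hlog : fd 0 = Real.log := funext fun y => by simp [fd, PQ]
    simpa [hlog, fdDeriv] using Real.hasDerivAt_log hx.ne'
  | succ d ih =>
    have hshift : HasDerivAt (fun y => fd d (y + 1)) (fdDeriv d (x + 1)) x := by
      simpa using (ih (x := x + 1) (by linarith)).comp_add_const x 1
    rw [← fdDeriv_add_one_sub d hx]
    refine (hshift.sub (ih hx)).congr_of_eventuallyEq ?_
    filter_upwards [Ioi_mem_nhds hx] with y hy using fd_succ d hy

theorem monotoneOn_or_antitoneOn_fdDeriv (d : ℕ) :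
    MonotoneOn (fdDeriv d) (Set.Ioi 0) ∨ AntitoneOn (fdDeriv d) (Set.Ioi 0) :=
  monotoneOn_or_antitoneOn_const_div _ (monotoneOn_ascPochhammer_eval _)
    fun x hx => ascPochhammer_pos _ x hx

theorem fd_succ_mem_uIcc (d : ℕ) {x : ℝ} (hx : 0 < x) :
    fd (d + 1) x ∈ Set.uIcc (fdDeriv d x) (fdDeriv d (x + 1)) := by
  have hsub : Set.Icc x (x + 1) ⊆ Set.Ioi 0 := fun y hy => hx.trans_le hy.1
  have h := slope_mem_uIcc_of_hasDerivAt (lt_add_one x)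
    (fun y hy => hasDerivAt_fd d (hsub hy))
    ((monotoneOn_or_antitoneOn_fdDeriv d).imp (·.mono hsub) (·.mono hsub))
  rwa [add_sub_cancel_left, div_one, ← fd_succ d hx] at h

theorem fdDeriv_isEquivalent (d : ℕ) :
    fdDeriv d ~[atTop] fun x => (-1) ^ d * d.factorial / x ^ (d + 1) := by
  have h := (monic_ascPochhammer ℝ (d + 1)).isEquivalent_const_div_eval ((-1) ^ d * d.factorial)
  rwa [ascPochhammer_natDegree] at h

theorem fdDeriv_add_one_isEquivalent (d : ℕ) :
    (fun x => fdDeriv d (x + 1)) ~[atTop] fun x => (-1) ^ d * d.factorial / x ^ (d + 1) := by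
  have h := ((monic_ascPochhammer ℝ (d + 1)).comp_X_add_C 1).isEquivalent_const_div_eval
    ((-1) ^ d * d.factorial)
  rw [natDegree_comp, natDegree_X_add_C, ascPochhammer_natDegree, mul_one] at h
  simp only [eval_comp, eval_add, eval_X, eval_C] at h
  exact h

/-- Asymptotics of `f_d`: (i) for `d ≥ 1`, `f_d(x) ~ K_d/x^d` at `+∞` for some `K_d ≠ 0`;
(ii) `f_d'(x) ~ L_d/x^(d+1)` at `+∞` for some `L_d ≠ 0`; (iii) `f_d'` is monotone on some
half-line `[H_d, ∞)` with `H_d > 0`. -/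
theorem fd_asymptotics (d : ℕ) :
    (1 ≤ d → ∃ K : ℝ, K ≠ 0 ∧ (fd d) ~[atTop] (fun x => K / x ^ d)) ∧
      (∃ L : ℝ, L ≠ 0 ∧ (deriv (fd d)) ~[atTop] (fun x => L / x ^ (d + 1))) ∧
      (∃ H : ℝ, 0 < H ∧
        (MonotoneOn (deriv (fd d)) (Set.Ici H) ∨ AntitoneOn (deriv (fd d)) (Set.Ici H))) := by
  have hconst (e : ℕ) : (-1 : ℝ) ^ e * e.factorial ≠ 0 := by simp [Nat.factorial_ne_zero]
  have hderiv : Set.EqOn (fdDeriv d) (deriv (fd d)) (Set.Ioi 0) :=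
    fun x hx => (hasDerivAt_fd d hx).deriv.symm
  refine ⟨fun hd => ?_, ⟨_, hconst d, ?_⟩, ⟨1, one_pos, ?_⟩⟩
  · obtain ⟨e, rfl⟩ := Nat.exists_eq_add_of_le' hd
    refine ⟨_, hconst e, (fdDeriv_isEquivalent e).of_mem_uIcc (fdDeriv_add_one_isEquivalent e) ?_⟩
    filter_upwards [eventually_gt_atTop 0] with x hx using fd_succ_mem_uIcc e hx
  · exact (fdDeriv_isEquivalent d).congr_left <|
      (eventually_gt_atTop 0).mono fun x hx => hderiv hx
  · have hsub : Set.Ici (1 : ℝ) ⊆ Set.Ioi 0 := Set.Ici_subset_Ioi.2 one_pos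
    exact (monotoneOn_or_antitoneOn_fdDeriv d).imp
      (fun h => (h.mono hsub).congr (hderiv.mono hsub))
      (fun h => (h.mono hsub).congr (hderiv.mono hsub))
end
end

section
/- (Kusmin–Landau) Let a < b be real numbers, let f : [a,b] → ℝ be continuously differentiable with f′ monotone on [a,b], and suppose there exists λ₁ > 0 such that ‖f′(x)‖ ≥ λ₁ for all x ∈ [a,b], where ‖y‖ denotes the distance from the real number y to the nearest integer. Then | Σ_{n ∈ [a,b] ∩ ℤ} e^{2πi f(n)} | ≤ 2/(π λ₁). -/
/-!
By continuity `f'` takes its values in a single interval `[k + λ, k + 1 - λ]` with `k ∈ ℤ`, and by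
the mean value theorem so do the differences `f (n + 1) - f n`, which moreover increase with `n`.
After subtracting `k n` from the phase `x n = f n`, the differences `d n = x (n + 1) - x n` lie in
`[λ, 1 - λ]`, and `e (x n) = (e (x (n + 1)) - e (x n)) w (d n)` with
`w θ = (e θ - 1)⁻¹ = -1/2 - (i/2) cot (π θ)` (`weight` below). Summation by parts bounds the sum
by `‖w (d 0)‖ + ‖1 + w (d N)‖ + ∑ ‖w (d n) - w (d (n + 1))‖`; as `cot` decreases, the last sum
telescopes and the total is `(cot (π d 0 / 2) + tan (π d N / 2)) / 2 ≤ 2 / (π λ)` by `tan y ≥ y`.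
A decreasing `f'` is reduced to an increasing one by passing to `-f`, which conjugates the sum.
-/

open Real

lemma Real.cot_le_inv {y : ℝ} (h0 : 0 < y) (h1 : y < π / 2) : cot y ≤ y⁻¹ := by
  rw [← inv_inv (cot y), cot_inv_eq_tan]
  exact inv_anti₀ h0 (le_tan h0.le h1)

lemma Real.cot_le_cot {x y : ℝ} (hx : 0 < x) (hxy : x ≤ y) (hy : y < π) : cot y ≤ cot x := by
  have hsx : 0 < sin x := sin_pos_of_pos_of_lt_pi hx (hxy.trans_lt hy)
  have hsy : 0 < sin y := sin_pos_of_pos_of_lt_pi (hx.trans_le hxy) hy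
  have hsub : 0 ≤ sin (y - x) := sin_nonneg_of_nonneg_of_le_pi (by linarith) (by linarith)
  rw [cot_eq_cos_div_sin, cot_eq_cos_div_sin, div_le_div_iff₀ hsy hsx]
  nlinarith [sin_sub y x]

lemma Real.one_add_cos_div_sin {x : ℝ} (hx : sin x ≠ 0) : (1 + cos x) / sin x = cot (x / 2) := by
  have hx2 : x = 2 * (x / 2) := by ring
  rw [hx2, sin_two_mul] at hx
  have hs : sin (x / 2) ≠ 0 := by contrapose! hx; simp [hx]
  have hc : cos (x / 2) ≠ 0 := by contrapose! hx; simp [hx]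
  rw [cot_eq_cos_div_sin, hx2, cos_two_mul, sin_two_mul, ← hx2]
  field_simp
  ring

lemma Real.cot_pi_sub (x : ℝ) : cot (π - x) = -cot x := by
  rw [cot_eq_cos_div_sin, cot_eq_cos_div_sin, cos_pi_sub, sin_pi_sub, neg_div]

lemma Finset.sum_range_eq_of_eq_sub_mul {R : Type*} [CommRing R] {E w : ℕ → R} {N : ℕ}
    (h : ∀ n ≤ N, E n = (E (n + 1) - E n) * w n) :
    ∑ n ∈ Finset.range (N + 2), E n =
      E (N + 1) * (1 + w N) - E 0 * w 0 + ∑ n ∈ Finset.range N, E (n + 1) * (w n - w (n + 1)) := by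
  induction N with
  | zero => simp only [Finset.sum_range_succ, Finset.sum_range_zero]; linear_combination h 0 le_rfl
  | succ N ih =>
    rw [Finset.sum_range_succ, ih fun n hn => h n (by omega), Finset.sum_range_succ]
    linear_combination h (N + 1) le_rfl

lemma IsPreconnected.exists_int_subset_Icc {T : Set ℝ} (hT : IsPreconnected T) {y₀ : ℝ}
    (hy₀ : y₀ ∈ T) {lam : ℝ} (hlam : 0 < lam) (hdist : ∀ y ∈ T, ∀ m : ℤ, lam ≤ |y - m|) :
    ∃ k : ℤ, T ⊆ Set.Icc (k + lam) (k + 1 - lam) := by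
  have hnot : ∀ m : ℤ, (m : ℝ) ∉ T := fun m hm => by
    have := hdist m hm m
    rw [sub_self, abs_zero] at this
    linarith
  refine ⟨⌊y₀⌋, fun y hy => ?_⟩
  have hlow : (⌊y₀⌋ : ℝ) ≤ y := not_lt.1 fun h =>
    hnot ⌊y₀⌋ (hT.Icc_subset hy hy₀ ⟨h.le, Int.floor_le y₀⟩)
  have hup : y < ⌊y₀⌋ + 1 := not_le.1 fun h => hnot (⌊y₀⌋ + 1)
    (hT.Icc_subset hy₀ hy ⟨by push_cast; exact (Int.lt_floor_add_one y₀).le, by push_cast; exact h⟩)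
  have h₁ := hdist y hy ⌊y₀⌋
  have h₂ := hdist y hy (⌊y₀⌋ + 1)
  push_cast at h₂
  rw [abs_of_nonneg (by linarith)] at h₁
  rw [abs_of_neg (by linarith)] at h₂
  constructor <;> linarith

lemma sub_mem_Icc_of_monotoneOn_deriv {f f' : ℝ → ℝ} {a b : ℝ}
    (hderiv : ∀ x ∈ Set.Icc a b, HasDerivWithinAt f (f' x) (Set.Icc a b) x)
    (hmono : MonotoneOn f' (Set.Icc a b)) {u v : ℝ} (hu : a ≤ u) (huv : u < v) (hv : v ≤ b) :
    f v - f u ∈ Set.Icc (f' u * (v - u)) (f' v * (v - u)) := by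
  have hsub : Set.Icc u v ⊆ Set.Icc a b := Set.Icc_subset_Icc hu hv
  obtain ⟨c, hc, hfc⟩ := exists_hasDerivAt_eq_slope f f' huv
    (fun x hx => (hderiv x (hsub hx)).continuousWithinAt.mono hsub)
    (fun x hx => (hderiv x (hsub (Set.Ioo_subset_Icc_self hx))).hasDerivAt
      (Icc_mem_nhds (hu.trans_lt hx.1) (hx.2.trans_le hv)))
  have hvu : 0 < v - u := sub_pos.2 huv
  rw [eq_div_iff hvu.ne'] at hfc
  have hmem : ∀ {x}, u ≤ x → x ≤ v → x ∈ Set.Icc a b := fun h₁ h₂ => hsub ⟨h₁, h₂⟩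
  rw [← hfc]
  exact ⟨mul_le_mul_of_nonneg_right (hmono (hmem le_rfl huv.le) (hmem hc.1.le hc.2.le) hc.1.le)
      hvu.le,
    mul_le_mul_of_nonneg_right (hmono (hmem hc.1.le hc.2.le) (hmem huv.le le_rfl) hc.2.le) hvu.le⟩

namespace KusminLandau

noncomputable def e (t : ℝ) : ℂ := Complex.exp (2 * π * Complex.I * t)

lemma e_eq_exp_mul_I (t : ℝ) : e t = Complex.exp ((2 * π * t : ℝ) * Complex.I) := by
  rw [e]; push_cast; ring_nf

lemma norm_e (t : ℝ) : ‖e t‖ = 1 := by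
  rw [e_eq_exp_mul_I, Complex.norm_exp_ofReal_mul_I]

lemma e_add (s t : ℝ) : e (s + t) = e s * e t := by
  rw [e, e, e, ← Complex.exp_add]; push_cast; ring_nf

lemma e_intCast (m : ℤ) : e m = 1 := by
  rw [e, ← Complex.exp_int_mul_two_pi_mul_I m]; push_cast; ring_nf

lemma e_sub_intCast (t : ℝ) (m : ℤ) : e (t - m) = e t := by
  rw [sub_eq_add_neg, e_add, ← Int.cast_neg, e_intCast, mul_one]

lemma e_neg (t : ℝ) : e (-t) = starRingEnd ℂ (e t) := by
  rw [e, e, ← Complex.exp_conj]; simp [map_ofNat]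

noncomputable def weight (θ : ℝ) : ℂ := -1 / 2 - (cot (π * θ) / 2 : ℝ) * Complex.I

lemma e_sub_one_mul_weight {θ : ℝ} (hs : sin (π * θ) ≠ 0) : (e θ - 1) * weight θ = 1 := by
  have he : e θ = (cos (2 * (π * θ)) : ℂ) + (sin (2 * (π * θ)) : ℂ) * Complex.I := by
    rw [e_eq_exp_mul_I, Complex.exp_mul_I, ← Complex.ofReal_cos, ← Complex.ofReal_sin]
    ring_nf
  have hpyth := sin_sq_add_cos_sq (π * θ)
  rw [he, weight, cot_eq_cos_div_sin, cos_two_mul', sin_two_mul]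
  generalize sin (π * θ) = s, cos (π * θ) = c at hs hpyth ⊢
  have hpythC : (s : ℂ) ^ 2 + (c : ℂ) ^ 2 = 1 := by exact_mod_cast hpyth
  have hsC : (s : ℂ) ≠ 0 := by exact_mod_cast hs
  push_cast
  field_simp
  linear_combination ((s : ℂ) - c * Complex.I) * hpythC
    - 2 * (c : ℂ) ^ 2 * s * Complex.I_sq

lemma norm_half_add_cot_mul_I {θ : ℝ} (hs : 0 < sin (π * θ)) (σ : ℝ) (hσ : σ ^ 2 = 1) :
    ‖((σ / 2 : ℝ) : ℂ) + (-cot (π * θ) / 2 : ℝ) * Complex.I‖ = 1 / (2 * sin (π * θ)) := by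
  rw [Complex.norm_add_mul_I, ← sqrt_sq (by positivity : 0 ≤ 1 / (2 * sin (π * θ))),
    cot_eq_cos_div_sin]
  congr 1
  field_simp
  nlinarith [sin_sq_add_cos_sq (π * θ)]

lemma norm_weight {θ : ℝ} (hs : 0 < sin (π * θ)) : ‖weight θ‖ = 1 / (2 * sin (π * θ)) := by
  rw [← norm_half_add_cot_mul_I hs (-1) (by norm_num), weight]
  push_cast; ring_nf

lemma norm_one_add_weight {θ : ℝ} (hs : 0 < sin (π * θ)) :
    ‖1 + weight θ‖ = 1 / (2 * sin (π * θ)) := by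
  rw [← norm_half_add_cot_mul_I hs 1 (by norm_num), weight]
  push_cast; ring_nf

lemma norm_weight_sub_weight (θ₁ θ₂ : ℝ) :
    ‖weight θ₁ - weight θ₂‖ = |cot (π * θ₁) - cot (π * θ₂)| / 2 := by
  rw [weight, weight, show ∀ u v : ℂ, (-1 / 2 - u * Complex.I) - (-1 / 2 - v * Complex.I)
    = -(u - v) * Complex.I by intros; ring, ← Complex.ofReal_sub, norm_mul, norm_neg,
    Complex.norm_I, mul_one, Complex.norm_real, norm_eq_abs, ← sub_div, abs_div, abs_two]

lemma inv_two_sin_add_cot_div_two_le {lam θ : ℝ} (hlam : 0 < lam) (hθ : lam ≤ θ)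
    (hθ' : θ ≤ 1 - lam) : 1 / (2 * sin (π * θ)) + cot (π * θ) / 2 ≤ 1 / (π * lam) := by
  have hθ0 : 0 < θ := hlam.trans_le hθ
  have hsin : sin (π * θ) ≠ 0 :=
    (sin_pos_of_pos_of_lt_pi (by positivity) (by nlinarith [pi_pos])).ne'
  calc 1 / (2 * sin (π * θ)) + cot (π * θ) / 2 = cot (π * θ / 2) / 2 := by
        rw [← one_add_cos_div_sin hsin, cot_eq_cos_div_sin]; field_simp
    _ ≤ (π * θ / 2)⁻¹ / 2 := by
        gcongr; exact cot_le_inv (by positivity) (by nlinarith [pi_pos])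
    _ = 1 / (π * θ) := by field_simp
    _ ≤ 1 / (π * lam) := by gcongr

lemma inv_two_sin_sub_cot_div_two_le {lam θ : ℝ} (hlam : 0 < lam) (hθ : lam ≤ θ)
    (hθ' : θ ≤ 1 - lam) : 1 / (2 * sin (π * θ)) - cot (π * θ) / 2 ≤ 1 / (π * lam) := by
  have h := inv_two_sin_add_cot_div_two_le (θ := 1 - θ) hlam (by linarith) (by linarith)
  rwa [mul_one_sub, sin_pi_sub, cot_pi_sub, neg_div, ← sub_eq_add_neg] at h

theorem norm_sum_e_le {x : ℕ → ℝ} {N : ℕ} {lam : ℝ} (hlam : 0 < lam)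
    (hd : ∀ n ≤ N, x (n + 1) - x n ∈ Set.Icc lam (1 - lam))
    (hmono : ∀ n < N, x (n + 1) - x n ≤ x (n + 2) - x (n + 1)) :
    ‖∑ n ∈ Finset.range (N + 2), e (x n)‖ ≤ 2 / (π * lam) := by
  set d : ℕ → ℝ := fun n => x (n + 1) - x n
  have hπd : ∀ n ≤ N, 0 < π * d n ∧ π * d n < π := fun n hn => by
    obtain ⟨h₁, h₂⟩ : d n ∈ Set.Icc lam (1 - lam) := hd n hn
    constructor <;> nlinarith [pi_pos]
  have hsin : ∀ n ≤ N, 0 < sin (π * d n) := fun n hn =>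
    sin_pos_of_pos_of_lt_pi (hπd n hn).1 (hπd n hn).2
  have hrec : ∀ n ≤ N, e (x n) = (e (x (n + 1)) - e (x n)) * weight (d n) := fun n hn => by
    rw [show x (n + 1) = x n + d n by simp [d], e_add, ← mul_sub_one, mul_assoc,
      e_sub_one_mul_weight (hsin n hn).ne', mul_one]
  have hcot : ∀ n < N, cot (π * d (n + 1)) ≤ cot (π * d n) := fun n hn =>
    cot_le_cot (hπd n hn.le).1 (mul_le_mul_of_nonneg_left (hmono n hn) pi_pos.le)
      (hπd (n + 1) hn).2
  have htelescope : ∑ n ∈ Finset.range N, ‖e (x (n + 1)) * (weight (d n) - weight (d (n + 1)))‖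
      = cot (π * d 0) / 2 - cot (π * d N) / 2 := by
    rw [← Finset.sum_range_sub' (fun n => cot (π * d n) / 2)]
    refine Finset.sum_congr rfl fun n hn => ?_
    rw [norm_mul, norm_e, one_mul, norm_weight_sub_weight,
      abs_of_nonneg (sub_nonneg.2 (hcot n (Finset.mem_range.1 hn))), sub_div]
  rw [Finset.sum_range_eq_of_eq_sub_mul hrec]
  calc _ ≤ ‖e (x (N + 1)) * (1 + weight (d N))‖ + ‖e (x 0) * weight (d 0)‖
        + ∑ n ∈ Finset.range N, ‖e (x (n + 1)) * (weight (d n) - weight (d (n + 1)))‖ :=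
        (norm_add_le _ _).trans (add_le_add (norm_sub_le _ _) (norm_sum_le _ _))
    _ = (1 / (2 * sin (π * d N)) - cot (π * d N) / 2)
        + (1 / (2 * sin (π * d 0)) + cot (π * d 0) / 2) := by
        rw [htelescope, norm_mul, norm_mul, norm_e, norm_e, one_mul, one_mul,
          norm_one_add_weight (hsin N le_rfl), norm_weight (hsin 0 (Nat.zero_le N))]
        ring
    _ ≤ 1 / (π * lam) + 1 / (π * lam) := add_le_add
        (inv_two_sin_sub_cot_div_two_le hlam (hd N le_rfl).1 (hd N le_rfl).2)
        (inv_two_sin_add_cot_div_two_le hlam (hd 0 (Nat.zero_le N)).1 (hd 0 (Nat.zero_le N)).2)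
    _ = 2 / (π * lam) := by ring

theorem norm_sum_range_e_le {x : ℕ → ℝ} {M : ℕ} {lam : ℝ} (hlam : 0 < lam) (hlam' : lam ≤ 1 / 2)
    (hd : ∀ n, n + 1 < M → x (n + 1) - x n ∈ Set.Icc lam (1 - lam))
    (hmono : ∀ n, n + 2 < M → x (n + 1) - x n ≤ x (n + 2) - x (n + 1)) :
    ‖∑ n ∈ Finset.range M, e (x n)‖ ≤ 2 / (π * lam) :=
  match M with
  | 0 => by simp only [Finset.range_zero, Finset.sum_empty, norm_zero]; positivity
  | 1 => by
    rw [Finset.sum_range_one, norm_e, le_div_iff₀ (by positivity)]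
    nlinarith [pi_le_four]
  | N + 2 => norm_sum_e_le hlam (fun n hn => hd n (by omega)) (fun n hn => hmono n (by omega))

theorem norm_sum_e_le_of_mapsTo {a b : ℝ} {f f' : ℝ → ℝ}
    (hderiv : ∀ x ∈ Set.Icc a b, HasDerivWithinAt f (f' x) (Set.Icc a b) x)
    (hmono : MonotoneOn f' (Set.Icc a b)) {k : ℤ} {lam : ℝ} (hlam : 0 < lam) (hlam' : lam ≤ 1 / 2)
    (hf' : Set.MapsTo f' (Set.Icc a b) (Set.Icc (k + lam) (k + 1 - lam))) :
    ‖∑ n ∈ Finset.Icc ⌈a⌉ ⌊b⌋, e (f n)‖ ≤ 2 / (π * lam) := by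
  set A := ⌈a⌉
  set M := (⌊b⌋ + 1 - A).toNat
  -- subtracting `k j` leaves `e (x j)` unchanged and moves the differences into `[λ, 1 - λ]`
  set x : ℕ → ℝ := fun j => f (A + j) - k * j
  have hrange : ∀ j : ℕ, j + 1 < M → a ≤ A + j ∧ (A + j : ℝ) + 1 ≤ b := fun j hj => by
    have hjb : A + j + 1 ≤ ⌊b⌋ := by omega
    refine ⟨(Int.le_ceil a).trans (le_add_of_nonneg_right j.cast_nonneg),
      le_trans ?_ (Int.floor_le b)⟩
    exact_mod_cast hjb
  have hdiff : ∀ j : ℕ, j + 1 < M →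
      f' (A + j) - k ≤ x (j + 1) - x j ∧ x (j + 1) - x j ≤ f' (A + j + 1) - k := fun j hj => by
    obtain ⟨hslope₁, hslope₂⟩ := sub_mem_Icc_of_monotoneOn_deriv hderiv hmono (hrange j hj).1
      (lt_add_one _) (hrange j hj).2
    simp only [x, add_sub_cancel_left, mul_one] at hslope₁ hslope₂ ⊢
    push_cast
    rw [← add_assoc]
    constructor <;> linarith
  rw [Int.Icc_eq_finset_map, Finset.sum_map]
  convert norm_sum_range_e_le (x := x) hlam hlam' (fun j hj => ?_) (fun j hj => ?_) using 3
  · rename_i j _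
    rw [show x j = f (A + j) - ((k * j : ℤ) : ℝ) by push_cast; rfl, e_sub_intCast]
    simp
  · obtain ⟨ha, hb⟩ := hrange j hj
    have h₁ := hf' (show (A + j : ℝ) ∈ Set.Icc a b from ⟨ha, by linarith⟩)
    have h₂ := hf' (show (A + j + 1 : ℝ) ∈ Set.Icc a b from ⟨by linarith, hb⟩)
    have := hdiff j hj
    constructor <;> linarith [h₁.1, h₂.2]
  · have h₁ := hdiff j (by omega)
    have h₂ := hdiff (j + 1) hj
    push_cast at h₂
    rw [← add_assoc] at h₂
    linarith

theorem norm_sum_e_le_of_monotoneOn {a b : ℝ} (hab : a ≤ b) {f f' : ℝ → ℝ}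
    (hderiv : ∀ x ∈ Set.Icc a b, HasDerivWithinAt f (f' x) (Set.Icc a b) x)
    (hcont : ContinuousOn f' (Set.Icc a b)) (hmono : MonotoneOn f' (Set.Icc a b))
    {lam : ℝ} (hlam : 0 < lam) (hdist : ∀ x ∈ Set.Icc a b, ∀ m : ℤ, lam ≤ |f' x - m|) :
    ‖∑ n ∈ Finset.Icc ⌈a⌉ ⌊b⌋, e (f n)‖ ≤ 2 / (π * lam) := by
  have ha : a ∈ Set.Icc a b := ⟨le_rfl, hab⟩
  obtain ⟨k, hk⟩ := (isPreconnected_Icc.image f' hcont).exists_int_subset_Icc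
    (Set.mem_image_of_mem f' ha) hlam (by rintro _ ⟨x, hx, rfl⟩; exact hdist x hx)
  have hf' := Set.mapsTo_iff_image_subset.2 hk
  have hlam' : lam ≤ 1 / 2 := by linarith [(hf' ha).1, (hf' ha).2]
  exact norm_sum_e_le_of_mapsTo hderiv hmono hlam hlam' hf'

end KusminLandau

open KusminLandau in
/-- **Kusmin–Landau theorem.** Let `f : [a,b] → ℝ` be `C¹` with monotone derivative `f'` on
`[a,b]`, and suppose `‖f'(x)‖ ≥ λ₁ > 0` on `[a,b]`, where `‖y‖` is the distance from `y` to
the nearest integer. Then `|Σ_{n ∈ [a,b] ∩ ℤ} e^{2πi f(n)}| ≤ 2/(π λ₁)`. -/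
theorem kusmin_landau (a b : ℝ) (hab : a < b) (f f' : ℝ → ℝ)
    (hderiv : ∀ x ∈ Set.Icc a b, HasDerivWithinAt f (f' x) (Set.Icc a b) x)
    (hcont : ContinuousOn f' (Set.Icc a b))
    (hmono : MonotoneOn f' (Set.Icc a b) ∨ AntitoneOn f' (Set.Icc a b))
    (lam : ℝ) (hlam : 0 < lam)
    (hlow : ∀ x ∈ Set.Icc a b, lam ≤ |f' x - round (f' x)|) :
    ‖∑ n ∈ Finset.Icc ⌈a⌉ ⌊b⌋, Complex.exp (2 * Real.pi * Complex.I * (f n : ℂ))‖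
      ≤ 2 / (Real.pi * lam) := by
  have hdist : ∀ x ∈ Set.Icc a b, ∀ m : ℤ, lam ≤ |f' x - m| :=
    fun x hx m => (hlow x hx).trans (round_le (f' x) m)
  change ‖∑ n ∈ Finset.Icc ⌈a⌉ ⌊b⌋, e (f n)‖ ≤ 2 / (π * lam)
  rcases hmono with hmono | hanti
  · exact norm_sum_e_le_of_monotoneOn hab.le hderiv hcont hmono hlam hdist
  · have hneg := norm_sum_e_le_of_monotoneOn hab.le (fun x hx => (hderiv x hx).neg) hcont.neg
      hanti.neg hlam fun x hx m => by
        rw [show -f' x - m = -(f' x - ((-m : ℤ) : ℝ)) by push_cast; ring, abs_neg]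
        exact hdist x hx (-m)
    simpa only [Pi.neg_apply, e_neg, ← map_sum, RCLike.norm_conj] using hneg
end

section
/- Let u : ℕ → 𝔻 be a bounded arithmetic function with values in the closed unit disk. Then u is mean slowly varying, i.e., (1/N) Σ_{n ≤ N} |u(n+1) − u(n)| → 0 as N → ∞, if and only if every measure ν ∈ V(u) is concentrated on the set of fixed points of the shift (equivalently, Z_1 = Z_0 ν-almost everywhere for every ν ∈ V(u), so that every Furstenberg system of u is measure-theoretically the identity). -/
open MeasureTheory Filter Topology

noncomputable section

/-- `ν ∈ V(u)`: `ν` is a weak* limit of a subsequence of the empirical measures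
`E_N(u) = (1/N) Σ_{0 ≤ n < N} δ_{S^n u}`. -/
def memV (u : ℕ → ℂ) (ν : Measure (ℕ → ℂ)) : Prop :=
  ∃ N : ℕ → ℕ, StrictMono N ∧ (∀ m, 1 ≤ N m) ∧
    ∀ f : BoundedContinuousFunction (ℕ → ℂ) ℝ,
      Filter.Tendsto (fun m => (N m : ℝ)⁻¹ * ∑ n ∈ Finset.range (N m), f (shift^[n] (pt u)))
        atTop (𝓝 (∫ y, f y ∂ν))

/-!
Write `Δ_k = diffTest k`, i.e. `Δ_k(y) = min ‖y (k + 1) - y k‖ 2`. A probability measure is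
carried by the fixed points of the shift iff every `Δ_k` integrates to `0`, and along the orbit
of `u` the Cesàro averages of `Δ_k` are those of `|u (n + 1) - u n|` shifted by `k`. So if `u` is
mean slowly varying, every `ν ∈ V(u)` has `∫ Δ_k dν = 0` for all `k`. Conversely the orbit of `u`
stays in the compact set `𝔻^ℕ`, so by Prokhorov's theorem every subsequence of the empirical
measures has a further subsequence converging to some `ν ∈ V(u)`; along it the averages of
`|u (n + 1) - u n|` tend to `∫ Δ_0 dν = 0`, hence the whole sequence of averages tends to `0`.
-/

open Finset
open scoped ENNReal BoundedContinuousFunction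

theorem tendsto_inv_mul_sum_range_add {g : ℕ → ℝ}
    (h : Tendsto (fun N : ℕ => (N : ℝ)⁻¹ * ∑ n ∈ range N, g n) atTop (𝓝 0)) (k : ℕ) :
    Tendsto (fun N : ℕ => (N : ℝ)⁻¹ * ∑ n ∈ range N, g (n + k)) atTop (𝓝 0) := by
  have hN : Tendsto (fun N : ℕ => (N : ℝ)⁻¹) atTop (𝓝 0) := tendsto_inv_atTop_nhds_zero_nat
  have hlim : Tendsto (fun N : ℕ => (1 + k * (N : ℝ)⁻¹) *
        (((N + k : ℕ) : ℝ)⁻¹ * ∑ n ∈ range (N + k), g n) - (N : ℝ)⁻¹ * ∑ n ∈ range k, g n)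
      atTop (𝓝 0) := by
    simpa using ((tendsto_const_nhds.add (hN.const_mul (k : ℝ))).mul
      (h.comp (tendsto_add_atTop_nat k))).sub (hN.mul_const _)
  refine hlim.congr' ((eventually_ne_atTop 0).mono fun N hN0 => ?_)
  have hsplit : ∑ n ∈ range (N + k), g n = ∑ n ∈ range k, g n + ∑ n ∈ range N, g (n + k) := by
    rw [add_comm N, sum_range_add]
    simp only [add_comm k]
  rw [hsplit]
  push_cast
  field_simp
  ring

def diffTest (k : ℕ) : (ℕ → ℂ) →ᵇ ℝ :=
  .mkOfBound ⟨fun y => min ‖y (k + 1) - y k‖ 2, by fun_prop⟩ 2 fun y z =>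
    (Real.dist_le_of_mem_Icc ⟨le_min (norm_nonneg _) zero_le_two, min_le_right _ _⟩
      ⟨le_min (norm_nonneg _) zero_le_two, min_le_right _ _⟩).trans_eq (sub_zero 2)

theorem diffTest_apply (k : ℕ) (y : ℕ → ℂ) : diffTest k y = min ‖y (k + 1) - y k‖ 2 := rfl

theorem diffTest_nonneg (k : ℕ) : 0 ≤ ⇑(diffTest k) := fun _ =>
  le_min (norm_nonneg _) zero_le_two

theorem diffTest_eq_zero_iff {k : ℕ} {y : ℕ → ℂ} : diffTest k y = 0 ↔ y (k + 1) = y k := by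
  refine ⟨fun h => ?_, fun h => by simp [diffTest_apply, h]⟩
  rw [← norm_sub_eq_zero_iff]
  grind [diffTest_apply, norm_nonneg]

theorem measure_setOf_shift_fixed_eq_one_iff (ν : Measure (ℕ → ℂ)) [IsProbabilityMeasure ν] :
    ν {y | ∀ n, y (n + 1) = y n} = 1 ↔ ∀ k, ∫ y, diffTest k y ∂ν = 0 := by
  have hmeas : MeasurableSet {y : ℕ → ℂ | ∀ n, y (n + 1) = y n} := by
    simp only [Set.ofPred_forall]
    exact .iInter fun n => measurableSet_eq_fun (measurable_pi_apply _) (measurable_pi_apply _)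
  rw [← measure_univ (μ := ν), ← ae_iff_measure_eq hmeas.nullMeasurableSet, ae_all_iff]
  refine forall_congr' fun k => ?_
  rw [integral_eq_zero_iff_of_nonneg (diffTest_nonneg k) ((diffTest k).integrable ν)]
  exact eventually_congr (.of_forall fun y => diffTest_eq_zero_iff.symm)

theorem shift_iterate_apply (y : ℕ → ℂ) (n j : ℕ) : shift^[n] y j = y (j + n) := by
  induction n generalizing y with
  | zero => rfl
  | succ n ih => rw [Function.iterate_succ_apply, ih]; rfl

theorem shift_iterate_pt_mem_pi {u : ℕ → ℂ} (hu : ∀ n, 1 ≤ n → ‖u n‖ ≤ 1) (n : ℕ) :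
    shift^[n] (pt u) ∈ Set.univ.pi fun _ => Metric.closedBall (0 : ℂ) 1 := fun j _ => by
  simpa [shift_iterate_apply, pt] using hu (j + n + 1) (by omega)

def orbitAverage (u : ℕ → ℂ) (f : (ℕ → ℂ) →ᵇ ℝ) (N : ℕ) : ℝ :=
  (N : ℝ)⁻¹ * ∑ n ∈ range N, f (shift^[n] (pt u))

theorem orbitAverage_diffTest {u : ℕ → ℂ} (hu : ∀ n, 1 ≤ n → ‖u n‖ ≤ 1) (k N : ℕ) :
    orbitAverage u (diffTest k) N =
      (N : ℝ)⁻¹ * ∑ n ∈ range N, ‖u (n + k + 2) - u (n + k + 1)‖ := by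
  refine congrArg _ (sum_congr rfl fun n _ => ?_)
  simp only [diffTest_apply, shift_iterate_apply, pt]
  rw [min_eq_left]
  · congr 3 <;> omega
  · exact (norm_sub_le _ _).trans
      (by linarith [hu (k + 1 + n + 1) (by omega), hu (k + n + 1) (by omega)])

theorem inv_mul_sum_Icc_eq_orbitAverage {u : ℕ → ℂ} (hu : ∀ n, 1 ≤ n → ‖u n‖ ≤ 1) (N : ℕ) :
    (N : ℝ)⁻¹ * ∑ n ∈ Icc 1 N, ‖u (n + 1) - u n‖ = orbitAverage u (diffTest 0) N := by
  rw [orbitAverage_diffTest hu, ← Ico_add_one_right_eq_Icc, ← zero_add 1, ← sum_Ico_add',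
    ← range_eq_Ico]
  simp only [add_zero, zero_add, add_assoc, one_add_one_eq_two]

theorem tendsto_orbitAverage_diffTest {u : ℕ → ℂ} (hu : ∀ n, 1 ≤ n → ‖u n‖ ≤ 1)
    (h : Tendsto (orbitAverage u (diffTest 0)) atTop (𝓝 0)) (k : ℕ) :
    Tendsto (orbitAverage u (diffTest k)) atTop (𝓝 0) := by
  simp only [funext (orbitAverage_diffTest hu 0), add_zero] at h
  rw [funext (orbitAverage_diffTest hu k)]
  exact tendsto_inv_mul_sum_range_add h k

theorem memV.isProbabilityMeasure {u : ℕ → ℂ} {ν : Measure (ℕ → ℂ)} (hν : memV u ν) :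
    IsProbabilityMeasure ν := by
  obtain ⟨N, -, hN1, hconv⟩ := hν
  have hone : ∀ m,
      (N m : ℝ)⁻¹ * ∑ n ∈ range (N m), (1 : (ℕ → ℂ) →ᵇ ℝ) (shift^[n] (pt u)) = 1 :=
    fun m => by simp [Nat.one_le_iff_ne_zero.mp (hN1 m)]
  have h := tendsto_nhds_unique (hconv 1) (by simp only [hone]; exact tendsto_const_nhds)
  simp only [BoundedContinuousFunction.coe_one, Pi.one_apply, integral_const, smul_eq_mul,
    mul_one, measureReal_def] at h
  exact ⟨(ENNReal.toReal_eq_one_iff _).mp h⟩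

theorem memV.integral_diffTest_eq_zero {u : ℕ → ℂ} {ν : Measure (ℕ → ℂ)} (hν : memV u ν)
    {k : ℕ} (hk : Tendsto (orbitAverage u (diffTest k)) atTop (𝓝 0)) :
    ∫ y, diffTest k y ∂ν = 0 := by
  obtain ⟨N, hN, -, hconv⟩ := hν
  exact tendsto_nhds_unique (hconv _) (hk.comp hN.tendsto_atTop)

def empiricalMeasure {X : Type*} [MeasurableSpace X] (x : ℕ → X) (N : ℕ) : Measure X :=
  (N : ℝ≥0∞)⁻¹ • ∑ n ∈ range N, Measure.dirac (x n)

section empiricalMeasure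

variable {X : Type*} [MeasurableSpace X] (x : ℕ → X) {N : ℕ}

theorem isProbabilityMeasure_empiricalMeasure (hN : N ≠ 0) :
    IsProbabilityMeasure (empiricalMeasure x N) := by
  constructor
  simp [empiricalMeasure, ENNReal.inv_mul_cancel, hN]

theorem empiricalMeasure_compl_eq_zero [MeasurableSingletonClass X] {s : Set X}
    (hs : ∀ n, x n ∈ s) :
    empiricalMeasure x N sᶜ = 0 := by
  simp [empiricalMeasure, hs]

theorem integral_empiricalMeasure [MeasurableSingletonClass X] (f : X → ℝ) :
    ∫ y, f y ∂empiricalMeasure x N = (N : ℝ)⁻¹ * ∑ n ∈ range N, f (x n) := by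
  rw [empiricalMeasure, integral_smul_measure, integral_finsetSum_measure
    fun n _ => integrable_dirac enorm_lt_top]
  simp

end empiricalMeasure

theorem MeasureTheory.ProbabilityMeasure.exists_strictMono_tendsto_of_measure_compl_eq_zero
    {X : Type*} [TopologicalSpace X] [TopologicalSpace.MetrizableSpace X]
    [TopologicalSpace.SeparableSpace X] [MeasurableSpace X] [BorelSpace X]
    (μ : ℕ → ProbabilityMeasure X) {K : Set X} (hK : IsCompact K)
    (hμK : ∀ n, (μ n : Measure X) Kᶜ = 0) :
    ∃ ν : ProbabilityMeasure X, ∃ φ : ℕ → ℕ, StrictMono φ ∧ Tendsto (μ ∘ φ) atTop (𝓝 ν) := by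
  have htight : IsTightMeasureSet {(ν : Measure X) | ν ∈ Set.range μ} := by
    refine isTightMeasureSet_iff_exists_isCompact_measure_compl_le.mpr fun ε _ => ⟨K, hK, ?_⟩
    rintro _ ⟨_, ⟨n, rfl⟩, rfl⟩
    simp [hμK n]
  obtain ⟨ν, -, hν⟩ := (isCompact_closure_of_isTightMeasureSet htight).tendsto_subseq
    fun n => subset_closure (Set.mem_range_self n)
  exact ⟨ν, hν⟩

theorem exists_strictMono_tendsto_orbitAverage {u : ℕ → ℂ} (hu : ∀ n, 1 ≤ n → ‖u n‖ ≤ 1)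
    {N : ℕ → ℕ} (hN : ∀ m, N m ≠ 0) :
    ∃ ν : Measure (ℕ → ℂ), ∃ ψ : ℕ → ℕ, StrictMono ψ ∧
      ∀ f, Tendsto (fun m => orbitAverage u f (N (ψ m))) atTop (𝓝 (∫ y, f y ∂ν)) := by
  let orbit n := shift^[n] (pt u)
  let μ m : ProbabilityMeasure (ℕ → ℂ) :=
    ⟨empiricalMeasure orbit (N m), isProbabilityMeasure_empiricalMeasure _ (hN m)⟩
  obtain ⟨ν, ψ, hψ, hconv⟩ :=
    ProbabilityMeasure.exists_strictMono_tendsto_of_measure_compl_eq_zero μ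
      (isCompact_univ_pi fun _ => isCompact_closedBall 0 1)
      fun m => empiricalMeasure_compl_eq_zero _ (shift_iterate_pt_mem_pi hu)
  refine ⟨ν, ψ, hψ, fun f => ?_⟩
  exact (ProbabilityMeasure.tendsto_iff_forall_integral_tendsto.mp hconv f).congr fun m =>
    integral_empiricalMeasure _ _

/-- An arithmetic function `u : ℕ → 𝔻` is mean slowly varying, i.e.
`(1/N) Σ_{n ≤ N} |u(n+1) − u(n)| → 0`, if and only if every measure in `V(u)` is concentrated
on the set of fixed points of the shift — equivalently, every Furstenberg system of `u` is
measure-theoretically the identity. -/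
theorem mean_slowly_varying_iff_identity (u : ℕ → ℂ) (hu : ∀ n, 1 ≤ n → ‖u n‖ ≤ 1) :
    Filter.Tendsto (fun N : ℕ => (N : ℝ)⁻¹ * ∑ n ∈ Finset.Icc 1 N, ‖u (n + 1) - u n‖)
        atTop (𝓝 0)
      ↔ ∀ ν : Measure (ℕ → ℂ), memV u ν → ν {y : ℕ → ℂ | ∀ n, y (n + 1) = y n} = 1 := by
  simp only [inv_mul_sum_Icc_eq_orbitAverage hu]
  change Tendsto (orbitAverage u (diffTest 0)) atTop (𝓝 0) ↔ _
  refine ⟨fun h ν hν => ?_, fun h => tendsto_of_subseq_tendsto fun ns hns => ?_⟩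
  · have := hν.isProbabilityMeasure
    exact (measure_setOf_shift_fixed_eq_one_iff ν).mpr fun k =>
      hν.integral_diffTest_eq_zero (tendsto_orbitAverage_diffTest hu h k)
  · obtain ⟨φ, hφ, hnsφ⟩ := strictMono_subseq_of_tendsto_atTop hns
    have hpos : ∀ m, 1 ≤ ns (φ (m + 1)) := fun m =>
      (Nat.zero_le _).trans_lt (hnsφ m.lt_succ_self)
    obtain ⟨ν, ψ, hψ, hconv⟩ := exists_strictMono_tendsto_orbitAverage hu
      fun m => Nat.one_le_iff_ne_zero.mp (hpos m)
    have hmem : memV u ν := ⟨fun m => ns (φ (ψ m + 1)),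
      hnsφ.comp ((strictMono_id.add_const 1).comp hψ), fun m => hpos _, hconv⟩
    have := hmem.isProbabilityMeasure
    refine ⟨fun m => φ (ψ m + 1), ?_⟩
    simpa [(measure_setOf_shift_fixed_eq_one_iff ν).mp (h ν hmem) 0] using hconv (diffTest 0)
end
end
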